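/- For every integer r ≥ 5 with r ≡ 2 (mod 3), there exists a bipartite biregular graph with 6 vertices of degree r, 2r vertices of degree 3, and diameter 3; its order 2r + 6 attains the Moore bound M(r,3;3). -/

import Mathlib

/-- The bipartite graph on parts `A` and `B` determined by the relation `R`. -/
def bipGraph {A B : Type*} (R : A → B → Prop) : SimpleGraph (A ⊕ B) where
  Adj x y :=
    match x, y with
    | Sum.inl a, Sum.inr b => R a b
    | Sum.inr b, Sum.inl a => R a b
    | _, _ => False
  symm := ⟨by rintro (a | b) (a' | b') h <;> simp_all⟩
  loopless := ⟨by rintro (a | b) h <;> simp_all⟩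

/-!
Take the points `ℤ/6` and, writing `r = 3k + 2`, the `2r = 6k + 4` lines consisting of `k` copies
of each translate of `{0, 1, 3}` together with the four translates `{0,1,3}, …, {3,4,0}` by
`0, 1, 2, 3`, the first one with `3` switched to `5`. Every point lies on `3k + 2 = r` lines and
every line has `3` points. Since the differences of `{0, 1, 3}` cover every nonzero residue, any two
points lie on a common translate, and any two of the lines meet. In the incidence graph, points
and lines are therefore pairwise at distance `2`, a point and a line are at distance at most `3`,
and a non-incident point-line pair is at distance exactly `3`, having no common neighbour.
-/

lemma SimpleGraph.Adj.edist_le_two {V : Type*} {G : SimpleGraph V} {u v w : V}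
    (huv : G.Adj u v) (hvw : G.Adj v w) : G.edist u w ≤ 2 :=
  (Walk.cons huv (.cons hvw .nil)).edist_le

namespace bipGraph

variable {A B : Type*} {R : A → B → Prop}

@[simp] lemma adj_inl_inr {a : A} {b : B} : (bipGraph R).Adj (.inl a) (.inr b) ↔ R a b := .rfl

@[simp] lemma adj_inr_inl {a : A} {b : B} : (bipGraph R).Adj (.inr b) (.inl a) ↔ R a b := .rfl

@[simp] lemma not_adj_inl_inl {a a' : A} : ¬ (bipGraph R).Adj (.inl a) (.inl a') := id

@[simp] lemma not_adj_inr_inr {b b' : B} : ¬ (bipGraph R).Adj (.inr b) (.inr b') := id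

lemma ncard_neighborSet_inl (a : A) :
    ((bipGraph R).neighborSet (.inl a)).ncard = {b | R a b}.ncard := by
  have : (bipGraph R).neighborSet (.inl a) = .inr '' {b | R a b} := by
    ext (a' | b) <;> simp
  rw [this, Set.ncard_image_of_injective _ Sum.inr_injective]

lemma ncard_neighborSet_inr (b : B) :
    ((bipGraph R).neighborSet (.inr b)).ncard = {a | R a b}.ncard := by
  have : (bipGraph R).neighborSet (.inr b) = .inl '' {a | R a b} := by
    ext (a | b') <;> simp
  rw [this, Set.ncard_image_of_injective _ Sum.inl_injective]

lemma commonNeighbors_inl_inr (a : A) (b : B) :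
    (bipGraph R).commonNeighbors (.inl a) (.inr b) = ∅ := by
  ext (a' | b') <;> simp [SimpleGraph.mem_commonNeighbors]

theorem diam_eq_three (hA : ∀ a a', ∃ b, R a b ∧ R a' b)
    (hB : ∀ b b', ∃ a, R a b ∧ R a b') (hR : ∃ a b, ¬ R a b) : (bipGraph R).diam = 3 := by
  set G := bipGraph R
  have hll (a a' : A) : G.edist (.inl a) (.inl a') ≤ 2 := by
    obtain ⟨b, hab, ha'b⟩ := hA a a'
    exact SimpleGraph.Adj.edist_le_two (adj_inl_inr.2 hab) (adj_inr_inl.2 ha'b)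
  have hrr (b b' : B) : G.edist (.inr b) (.inr b') ≤ 2 := by
    obtain ⟨a, hab, hab'⟩ := hB b b'
    exact SimpleGraph.Adj.edist_le_two (adj_inr_inl.2 hab) (adj_inl_inr.2 hab')
  have hlr (a : A) (b : B) : G.edist (.inl a) (.inr b) ≤ 3 := by
    obtain ⟨a', ha'b, -⟩ := hB b b
    calc G.edist (.inl a) (.inr b)
        ≤ G.edist (.inl a) (.inl a') + G.edist (.inl a') (.inr b) := G.edist_triangle
      _ ≤ 2 + 1 := add_le_add (hll a a') (SimpleGraph.edist_eq_one_iff_adj.2 ha'b).le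
  have hle : G.ediam ≤ 3 := by
    refine SimpleGraph.ediam_le_of_edist_le ?_
    rintro (a | b) (a' | b')
    · exact (hll a a').trans (by norm_num)
    · exact hlr a b'
    · rw [SimpleGraph.edist_comm]
      exact hlr a' b
    · exact (hrr b b').trans (by norm_num)
  obtain ⟨a, b, hab⟩ := hR
  have hfar : 2 < G.edist (.inl a) (.inr b) :=
    SimpleGraph.two_lt_edist_iff.2 ⟨Sum.inl_ne_inr, hab, commonNeighbors_inl_inr a b⟩
  have hediam : G.ediam = 3 :=
    le_antisymm hle (Order.add_one_le_of_lt (hfar.trans_le G.edist_le_ediam))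
  rw [SimpleGraph.diam, hediam]
  rfl

end bipGraph

namespace MooreGraph

def cyclicLine (i : ZMod 6) : Finset (ZMod 6) := {i, i + 1, i + 3}

def extraLine : Fin 4 → Finset (ZMod 6) := ![{0, 1, 5}, {1, 2, 4}, {2, 3, 5}, {3, 4, 0}]

def line (k : ℕ) (x : Fin k × ZMod 6 ⊕ Fin 4) : Finset (ZMod 6) :=
  Sum.elim cyclicLine extraLine (x.map Prod.snd id)

@[simp] lemma line_inl (k : ℕ) (p : Fin k × ZMod 6) : line k (.inl p) = cyclicLine p.2 := rfl

@[simp] lemma line_inr (k : ℕ) (t : Fin 4) : line k (.inr t) = extraLine t := rfl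

lemma card_line (k : ℕ) (x : Fin k × ZMod 6 ⊕ Fin 4) : (line k x).card = 3 := by
  suffices ∀ x : ZMod 6 ⊕ Fin 4, (Sum.elim cyclicLine extraLine x).card = 3 from this _
  decide

lemma exists_mem_line_inter (k : ℕ) (x y : Fin k × ZMod 6 ⊕ Fin 4) :
    ∃ a, a ∈ line k x ∧ a ∈ line k y := by
  suffices ∀ x y : ZMod 6 ⊕ Fin 4, ∃ a,
      a ∈ Sum.elim cyclicLine extraLine x ∧ a ∈ Sum.elim cyclicLine extraLine y from this _ _
  decide

lemma exists_mem_cyclicLine :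
    ∀ a a' : ZMod 6, ∃ i, a ∈ cyclicLine i ∧ a' ∈ cyclicLine i := by
  decide

lemma card_filter_mem_cyclicLine :
    ∀ a : ZMod 6, (Finset.univ.filter (a ∈ cyclicLine ·)).card = 3 := by
  decide

lemma card_filter_mem_extraLine :
    ∀ a : ZMod 6, (Finset.univ.filter (a ∈ extraLine ·)).card = 2 := by
  decide

lemma card_filter_mem_line (k : ℕ) (a : ZMod 6) :
    (Finset.univ.filter (a ∈ line k ·)).card = 3 * k + 2 := by
  have : Finset.univ.filter (a ∈ line k ·) =
      (Finset.univ ×ˢ Finset.univ.filter (a ∈ cyclicLine ·)).disjSum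
        (Finset.univ.filter (a ∈ extraLine ·)) := by
    ext (⟨x, i⟩ | t) <;> simp
  rw [this, Finset.card_disjSum, Finset.card_product, card_filter_mem_cyclicLine,
    card_filter_mem_extraLine, Finset.card_univ, Fintype.card_fin, mul_comm]

variable {ι : Type*} {k : ℕ} (e : ι ≃ Fin k × ZMod 6 ⊕ Fin 4)

def incidence (a : ZMod 6) (j : ι) : Prop := a ∈ line k (e j)

lemma ncard_neighborSet_point (a : ZMod 6) :
    ((bipGraph (incidence e)).neighborSet (.inl a)).ncard = 3 * k + 2 := by
  rw [bipGraph.ncard_neighborSet_inl, ← card_filter_mem_line k a, ← Set.toFinset_ofPred,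
    ← Set.ncard_eq_toFinset_card']
  exact Set.ncard_preimage_of_injective_subset_range (s := {x | a ∈ line k x}) e.injective
    (by simp)

lemma ncard_neighborSet_line (j : ι) :
    ((bipGraph (incidence e)).neighborSet (.inr j)).ncard = 3 := by
  rw [bipGraph.ncard_neighborSet_inr, ← card_line k (e j)]
  exact Set.ncard_coe_finset _

lemma diam_eq_three (hk : 0 < k) : (bipGraph (incidence e)).diam = 3 := by
  refine bipGraph.diam_eq_three (fun a a' => ?_) (fun j j' => exists_mem_line_inter k _ _)
    ⟨2, e.symm (.inr 0), by
      simpa [incidence] using (by decide : (2 : ZMod 6) ∉ extraLine 0)⟩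
  obtain ⟨i, hi⟩ := exists_mem_cyclicLine a a'
  exact ⟨e.symm (.inl (⟨0, hk⟩, i)), by simpa [incidence] using hi⟩

end MooreGraph

lemma moore_bound_eq_two_mul_add_six {r : ℕ} (hr : 2 ≤ r) (hr3 : r.Coprime 3) :
    (1 + 3 * (r - 1)) / (r / Nat.gcd r 3) * (r / Nat.gcd r 3 + 3 / Nat.gcd r 3) = 2 * r + 6 := by
  rw [hr3.gcd_eq_one]
  simp only [Nat.div_one]
  rw [show 1 + 3 * (r - 1) = (r - 2) + r * 2 by omega, Nat.add_mul_div_left _ _ (by omega),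
    Nat.div_eq_of_lt (by omega)]
  ring

open MooreGraph in
/-- For every integer `r ≥ 5` with `r ≡ 2 (mod 3)`, there exists a
bipartite biregular graph with `6` vertices of degree `r`, `2r` vertices of degree `3`,
and diameter `3`; its order `2r+6` attains the Moore bound `M(r,3;3)`. -/
theorem stmt_17 (r : ℕ) (hr : 5 ≤ r) (hmod : r % 3 = 2) :
    ∃ R : ZMod 6 → Fin (2 * r) → Prop,
      (∀ j : ZMod 6, ((bipGraph R).neighborSet (Sum.inl j)).ncard = r) ∧
      (∀ i : Fin (2 * r), ((bipGraph R).neighborSet (Sum.inr i)).ncard = 3) ∧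
      (bipGraph R).diam = 3 ∧
      Fintype.card (ZMod 6 ⊕ Fin (2 * r)) =
        ((1 + 3 * (r - 1)) / (r / Nat.gcd r 3)) * (r / Nat.gcd r 3 + 3 / Nat.gcd r 3) := by
  obtain ⟨k, rfl⟩ : ∃ k, r = 3 * k + 2 := ⟨r / 3, by omega⟩
  let e : Fin (2 * (3 * k + 2)) ≃ Fin k × ZMod 6 ⊕ Fin 4 :=
    Fintype.equivOfCardEq <| by
      simp only [Fintype.card_fin, Fintype.card_sum, Fintype.card_prod, ZMod.card]
      ring
  have hcop : (3 * k + 2).Coprime 3 := by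
    rw [Nat.coprime_comm, Nat.Prime.coprime_iff_not_dvd Nat.prime_three]
    omega
  refine ⟨incidence e, ncard_neighborSet_point e, ncard_neighborSet_line e,
    diam_eq_three e (by omega), ?_⟩
  rw [moore_bound_eq_two_mul_add_six (by omega) hcop]
  rw [Fintype.card_sum, ZMod.card, Fintype.card_fin]
  ring
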